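/- arXiv:math/0202024 — 2 statements merged into one kernel-verified Lean document; each statement's English description precedes it below -/
import Mathlib

section
/- Let F₂ be the free group on two generators x and y, and let Q be the quotient of ℤ[F₂] by the additive subgroup generated by all elements [g] − [(x²y)ᵃ·g·(x²y)ᵇ] (g ∈ F₂, a, b ∈ ℤ), all elements [g] − [g⁻¹] (g ∈ F₂), the element [1], and all elements [g] − [g·x⁻²] (g ∈ F₂). Then the image in Q of the basis element [x·y·x⁻¹] is nonzero. -/
/-!
Map `F₂` to `S₃` by `x ↦ (0 1)`, `y ↦ (1 2)`, and let `K` be the preimage of the stabiliser of `0`.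
Counting, with multiplicity, the basis elements `[g]` with `g ∉ K` is an additive map `ℤ[F₂] → ℤ`.
It kills every relation, because `K` is a subgroup containing `x²` and `x²y ↦ (1 2)`,
but it sends `[x y x⁻¹]` to `1`, since `x y x⁻¹ ↦ (0 2)` moves `0`.
-/

noncomputable section

/-- The free group on two generators `x` and `y`. -/
abbrev F2 := FreeGroup (Fin 2)

/-- The generator `x`. -/
def x : F2 := FreeGroup.of 0

/-- The generator `y`. -/
def y : F2 := FreeGroup.of 1

/-- The basis element `[g]` of the free abelian group `ℤ[F₂]`. -/
def e (g : F2) : F2 →₀ ℤ := Finsupp.single g 1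

/-- The additive subgroup of `ℤ[F₂]` generated by all `[g] − [(x²y)ᵃ·g·(x²y)ᵇ]`,
all `[g] − [g⁻¹]`, the element `[1]`, and all `[g] − [g·x⁻²]`. -/
def qRel : AddSubgroup (F2 →₀ ℤ) :=
  AddSubgroup.closure
    ({v | ∃ (g : F2) (a b : ℤ), v = e g - e ((x * x * y) ^ a * g * (x * x * y) ^ b)} ∪
      {v | ∃ g : F2, v = e g - e g⁻¹} ∪ {e (1 : F2)} ∪
      {v | ∃ g : F2, v = e g - e (g * x⁻¹ * x⁻¹)})

/-- The paper's target group `Λ̃_{x²y}/Φ(k)`. -/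
abbrev Q := (F2 →₀ ℤ) ⧸ qRel

namespace Subgroup

variable {G : Type*} [Group G] (K : Subgroup G)

def countOutside : (G →₀ ℤ) →+ ℤ :=
  (Finsupp.linearCombination ℤ ((K : Set G)ᶜ.indicator 1)).toAddMonoidHom

variable {K}

theorem countOutside_single_of_mem {g : G} (hg : g ∈ K) :
    K.countOutside (Finsupp.single g 1) = 0 := by
  simp [countOutside, hg]

theorem countOutside_single_of_not_mem {g : G} (hg : g ∉ K) :
    K.countOutside (Finsupp.single g 1) = 1 := by
  simp [countOutside, hg]

theorem countOutside_single_eq_of_mem_iff {g h : G} (hgh : g ∈ K ↔ h ∈ K) :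
    K.countOutside (Finsupp.single g 1) = K.countOutside (Finsupp.single h 1) := by
  by_cases hg : g ∈ K
  · rw [countOutside_single_of_mem hg, countOutside_single_of_mem (hgh.1 hg)]
  · rw [countOutside_single_of_not_mem hg, countOutside_single_of_not_mem (mt hgh.2 hg)]

end Subgroup

open Subgroup

theorem qRel_le_ker_countOutside {K : Subgroup F2} (hγ : x * x * y ∈ K) (hx : x * x ∈ K) :
    qRel ≤ K.countOutside.ker := by
  refine (AddSubgroup.closure_le _).2 ?_
  rintro v (((⟨g, a, b, rfl⟩ | ⟨g, rfl⟩) | rfl) | ⟨g, rfl⟩) <;>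
    simp only [SetLike.mem_coe, AddMonoidHom.mem_ker, map_sub, e, sub_eq_zero]
  · refine countOutside_single_eq_of_mem_iff ?_
    rw [mul_mem_cancel_right (zpow_mem hγ b), mul_mem_cancel_left (zpow_mem hγ a)]
  · exact countOutside_single_eq_of_mem_iff (inv_mem_iff (x := g)).symm
  · exact countOutside_single_of_mem K.one_mem
  · refine countOutside_single_eq_of_mem_iff ?_
    rw [mul_assoc, ← mul_inv_rev, mul_mem_cancel_right (inv_mem hx)]

def ρ : F2 →* Equiv.Perm (Fin 3) :=
  FreeGroup.lift ![Equiv.swap 0 1, Equiv.swap 1 2]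

def stabilizerPreimage : Subgroup F2 :=
  (MulAction.stabilizer (Equiv.Perm (Fin 3)) (0 : Fin 3)).comap ρ

theorem mem_stabilizerPreimage_iff {g : F2} : g ∈ stabilizerPreimage ↔ ρ g 0 = 0 := by
  simp [stabilizerPreimage, Equiv.Perm.smul_def]

theorem ρ_x : ρ x = Equiv.swap 0 1 := by simp [ρ, x]

theorem ρ_y : ρ y = Equiv.swap 1 2 := by simp [ρ, y]

theorem x_mul_x_mul_y_mem : x * x * y ∈ stabilizerPreimage := by
  rw [mem_stabilizerPreimage_iff, map_mul, map_mul, ρ_x, ρ_y]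
  decide

theorem x_mul_x_mem : x * x ∈ stabilizerPreimage := by
  rw [mem_stabilizerPreimage_iff, map_mul, ρ_x]
  decide

theorem x_mul_y_mul_x_inv_not_mem : x * y * x⁻¹ ∉ stabilizerPreimage := by
  rw [mem_stabilizerPreimage_iff, map_mul, map_mul, map_inv, ρ_x, ρ_y]
  decide

theorem stmt14 : (QuotientAddGroup.mk (e (x * y * x⁻¹)) : Q) ≠ 0 := by
  intro h
  have hmem := qRel_le_ker_countOutside x_mul_x_mul_y_mem x_mul_x_mem
    ((QuotientAddGroup.eq_zero_iff _).mp h)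
  rw [AddMonoidHom.mem_ker, e, countOutside_single_of_not_mem x_mul_y_mul_x_inv_not_mem] at hmem
  exact one_ne_zero hmem
end
end

section
/- Let F₂ be the free group on two generators x and y, and let Q be the quotient of ℤ[F₂] by the additive subgroup generated by all elements [g] − [(x²y)ᵃ·g·(x²y)ᵇ] (g ∈ F₂, a, b ∈ ℤ), all elements [g] − [g⁻¹] (g ∈ F₂), the element [1], and all elements [g] − [g·x⁻²] (g ∈ F₂). Then Q is not finitely generated as an abelian group. -/
noncomputable section

/-! ### Auxiliary development -/

abbrev GL2 := GL (Fin 2) ℤ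

def sU : GL2 :=
  ⟨!![0,1;1,0], !![0,1;1,0],
   by rw [Matrix.mul_fin_two]; norm_num; exact Matrix.one_fin_two.symm,
   by rw [Matrix.mul_fin_two]; norm_num; exact Matrix.one_fin_two.symm⟩

def tU : GL2 :=
  ⟨!![1,2;0,1], !![1,-2;0,1],
   by rw [Matrix.mul_fin_two]; norm_num; exact Matrix.one_fin_two.symm,
   by rw [Matrix.mul_fin_two]; norm_num; exact Matrix.one_fin_two.symm⟩

lemma sU_sq : sU * sU = 1 := by
  ext : 1
  show (!![0,1;1,0] * !![(0:ℤ),1;1,0]) = 1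
  rw [Matrix.mul_fin_two]; norm_num; exact Matrix.one_fin_two.symm

lemma tU_zpow (a : ℤ) : ((tU ^ a : GL2) : Matrix (Fin 2) (Fin 2) ℤ) = !![1, 2*a; 0, 1] := by
  induction a using Int.induction_on with
  | zero => simp; exact Matrix.one_fin_two
  | succ k ih =>
      rw [zpow_add_one, Units.val_mul, ih]
      show _ * (!![(1:ℤ),2;0,1]) = _
      rw [Matrix.mul_fin_two]; norm_num; ring_nf
  | pred k ih =>
      rw [zpow_sub_one, Units.val_mul, ih]
      show _ * (!![(1:ℤ),-2;0,1]) = _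
      rw [Matrix.mul_fin_two]; norm_num; ring_nf

def pi2 : F2 →* GL2 := FreeGroup.lift ![sU, tU]

lemma pi2_x : pi2 x = sU := FreeGroup.lift_apply_of
lemma pi2_y : pi2 y = tU := FreeGroup.lift_apply_of

lemma pi2_c : pi2 (x * x * y) = tU := by
  rw [map_mul, map_mul, pi2_x, pi2_y, sU_sq, one_mul]

/-- The relevant matrix entry. -/
def E (g : F2) : ℤ := ((pi2 g : GL2) : Matrix (Fin 2) (Fin 2) ℤ) 1 0

lemma entry_conj (a b : ℤ) (M : Matrix (Fin 2) (Fin 2) ℤ) :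
    (!![1,2*a;0,1] * M * !![(1:ℤ),2*b;0,1]) 1 0 = M 1 0 := by
  simp [Matrix.mul_apply, Fin.sum_univ_two, Matrix.vecMul, Matrix.vecHead,
    Matrix.vecTail, dotProduct]

lemma inv_entry (u : GL2) :
    ((u⁻¹ : GL2) : Matrix (Fin 2) (Fin 2) ℤ) 1 0 = (u : Matrix (Fin 2) (Fin 2) ℤ) 1 0 ∨
    ((u⁻¹ : GL2) : Matrix (Fin 2) (Fin 2) ℤ) 1 0 = -((u : Matrix (Fin 2) (Fin 2) ℤ) 1 0) := by
  set M : Matrix (Fin 2) (Fin 2) ℤ := (u : Matrix (Fin 2) (Fin 2) ℤ) with hM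
  set N : Matrix (Fin 2) (Fin 2) ℤ := ((u⁻¹ : GL2) : Matrix (Fin 2) (Fin 2) ℤ) with hN
  have h2 : N * M = 1 := by
    rw [hM, hN, ← Units.val_mul, inv_mul_cancel u, Units.val_one]
  have hdet : M.det * N.det = 1 := by
    rw [mul_comm, ← Matrix.det_mul, h2, Matrix.det_one]
  have e10 : N 1 0 * M 0 0 + N 1 1 * M 1 0 = 0 := by
    have := congrFun (congrFun h2 1) 0
    simpa [Matrix.mul_apply, Fin.sum_univ_two, Matrix.one_apply] using this
  have e11 : N 1 0 * M 0 1 + N 1 1 * M 1 1 = 1 := by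
    have := congrFun (congrFun h2 1) 1
    simpa [Matrix.mul_apply, Fin.sum_univ_two, Matrix.one_apply] using this
  have key : N 1 0 * M.det = - M 1 0 := by
    rw [Matrix.det_fin_two]
    linear_combination M 1 1 * e10 - M 1 0 * e11
  rcases Int.isUnit_iff.mp (IsUnit.of_mul_eq_one _ hdet) with h | h
  · right; rw [h, mul_one] at key; exact key
  · left; rw [h] at key; linarith

lemma E_conj (a b : ℤ) (g : F2) : E ((x * x * y) ^ a * g * (x * x * y) ^ b) = E g := by
  unfold E
  rw [map_mul, map_mul, map_zpow, map_zpow, pi2_c, Units.val_mul, Units.val_mul,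
    tU_zpow, tU_zpow]
  exact entry_conj a b _

lemma E_inv (g : F2) : E g⁻¹ = E g ∨ E g⁻¹ = - E g := by
  unfold E
  rw [map_inv]
  exact inv_entry (pi2 g)

lemma sU_inv : sU⁻¹ = sU := inv_eq_of_mul_eq_one_right sU_sq

lemma E_xinv (g : F2) : E (g * x⁻¹ * x⁻¹) = E g := by
  unfold E
  rw [map_mul, map_mul, map_inv, pi2_x, sU_inv, mul_assoc, sU_sq, mul_one]

lemma E_one : E 1 = 0 := by
  unfold E
  rw [map_one, Units.val_one]
  simp [Matrix.one_apply]

lemma E_w (m : ℕ) : E (x * y ^ (m : ℤ) * x) = 2 * m := by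
  unfold E
  rw [map_mul, map_mul, map_zpow, pi2_x, pi2_y, Units.val_mul, Units.val_mul, tU_zpow]
  show (!![(0:ℤ),1;1,0] * !![(1:ℤ), 2*(m:ℤ); 0,1] * !![(0:ℤ),1;1,0] : Matrix (Fin 2) (Fin 2) ℤ) 1 0 = 2*m
  simp [Matrix.mul_apply, Fin.sum_univ_two, Matrix.vecMul, Matrix.vecHead,
    Matrix.vecTail, dotProduct]

/-- The invariant predicate: entry `(1,0)` is `± 2m`. -/
def P (m : ℕ) (g : F2) : Prop := E g = 2 * (m : ℤ) ∨ E g = -(2 * (m : ℤ))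

open Classical in
/-- The invariant function. -/
def psi (m : ℕ) (g : F2) : ZMod 2 := if P m g then 1 else 0

lemma psi_congr {m : ℕ} {g h : F2} (hE : P m g ↔ P m h) : psi m g = psi m h := by
  unfold psi
  by_cases hg : P m g
  · rw [if_pos hg, if_pos (hE.mp hg)]
  · rw [if_neg hg, if_neg (fun hh => hg (hE.mpr hh))]

/-- The linear extension to `ℤ[F₂]`. -/
def phi (m : ℕ) : (F2 →₀ ℤ) →+ ZMod 2 :=
  Finsupp.liftAddHom fun g => zmultiplesHom (ZMod 2) (psi m g)

lemma phi_e (m : ℕ) (g : F2) : phi m (e g) = psi m g := by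
  unfold phi e
  rw [Finsupp.liftAddHom_apply_single, zmultiplesHom_apply, one_zsmul]

lemma qRel_le_ker (k : ℕ) : qRel ≤ (phi (k+1)).ker := by
  unfold qRel
  rw [AddSubgroup.closure_le]
  rintro v (((⟨g, a, b, rfl⟩ | ⟨g, rfl⟩) | rfl) | ⟨g, rfl⟩) <;>
    rw [SetLike.mem_coe, AddMonoidHom.mem_ker]
  · rw [map_sub, phi_e, phi_e, psi_congr (g := (x*x*y)^a * g * (x*x*y)^b) (h := g), sub_self]
    unfold P; rw [E_conj]
  · rw [map_sub, phi_e, phi_e, psi_congr (g := g⁻¹) (h := g), sub_self]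
    unfold P
    rcases E_inv g with h | h
    · rw [h]
    · rw [h]; omega
  · rw [phi_e]
    unfold psi
    rw [if_neg]
    unfold P
    rw [E_one]
    push_cast
    omega
  · rw [map_sub, phi_e, phi_e, psi_congr (g := g * x⁻¹ * x⁻¹) (h := g), sub_self]
    unfold P; rw [E_xinv]

/-- The induced homomorphisms on `Q`. -/
def Phi (k : ℕ) : Q →+ ZMod 2 :=
  QuotientAddGroup.lift qRel (phi (k+1)) (qRel_le_ker k)

lemma Phi_eval (k m : ℕ) :
    Phi k (QuotientAddGroup.mk (e (x * y ^ ((m : ℤ)+1) * x))) = if m = k then 1 else 0 := by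
  unfold Phi
  rw [QuotientAddGroup.lift_mk, phi_e]
  unfold psi
  have hw : E (x * y ^ ((m : ℤ)+1) * x) = 2 * ((m+1 : ℕ) : ℤ) := by
    have := E_w (m+1)
    push_cast at this ⊢
    convert this using 4
  by_cases h : m = k
  · subst h
    rw [if_pos, if_pos rfl]
    unfold P
    left; rw [hw]
  · rw [if_neg, if_neg h]
    unfold P
    rw [hw]
    push_cast
    omega

theorem stmt15 : ¬ AddGroup.FG Q := by
  intro h
  obtain ⟨S, hSc, hSf⟩ := AddGroup.fg_iff.mp h
  haveI := hSf.to_subtype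
  obtain ⟨m, n, hmn, hFeq⟩ :=
    Finite.exists_ne_map_eq_of_infinite (fun k : ℕ => fun s : S => Phi k (s : Q))
  have hker : AddSubgroup.closure S ≤ (Phi m - Phi n).ker := by
    rw [AddSubgroup.closure_le]
    intro s hs
    rw [SetLike.mem_coe, AddMonoidHom.mem_ker, AddMonoidHom.sub_apply, sub_eq_zero]
    exact congrFun hFeq ⟨s, hs⟩
  have hall : ∀ q : Q, Phi m q = Phi n q := by
    intro q
    have : q ∈ AddSubgroup.closure S := by rw [hSc]; trivial
    have := hker this
    rw [AddMonoidHom.mem_ker, AddMonoidHom.sub_apply, sub_eq_zero] at this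
    exact this
  have h1 := Phi_eval m m
  have h2 := Phi_eval n m
  rw [hall] at h1
  rw [if_pos rfl] at h1
  rw [if_neg hmn, h1] at h2
  exact one_ne_zero h2
end
end
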